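/- Let T_R, T_B be finite nonempty sets in ℝ^d with conv(T_R) ∩ conv(T_B) = ∅, and let (r, b) be any closest pair with r ∈ conv(T_R), b ∈ conv(T_B) realizing dist(conv(T_R), conv(T_B)). Then the perpendicular bisector hyperplane h* of the segment rb is a strong separator of T = T_R ∪ T_B with margin M_{h*}(T) = dist(r, b)/2, and every strong separator h ≠ h* satisfies M_h(T) < dist(r, b)/2. In particular the maximum-margin separator of T exists and is unique, and it equals h* for every choice of closest pair (r, b). -/

import Mathlib

open scoped RealInnerProductSpace

/-!
A closest pair `(r, b)` of two convex sets satisfies the variational inequalities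
`⟪b - r, x - r⟫ ≤ 0` on the first set and `⟪b - r, y - b⟫ ≥ 0` on the second, so every point of
`T` lies at distance at least `‖b - r‖ / 2` from the bisector of `rb`.

Conversely, if a strong separator `{x | ⟪w, x⟫ = c}` has margin `m`, the half-spaces
`⟪w, x⟫ ≤ c - m‖w‖` and `⟪w, x⟫ ≥ c + m‖w‖` contain the two hulls, hence `r` and `b`, so
`2m‖w‖ ≤ ⟪w, b - r⟫ ≤ ‖w‖ ‖b - r‖`. If `m = ‖b - r‖ / 2` all these inequalities are tight:
equality in Cauchy–Schwarz makes `w` a positive multiple of `b - r`, and `r` lying at distance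
exactly `m` pins down `c`, so the hyperplane is the bisector.
-/

/-- The hyperplane `{x : ⟪w, x⟫ = c}`. -/
def hplane (d : ℕ) (w : EuclideanSpace ℝ (Fin d)) (c : ℝ) :
    Set (EuclideanSpace ℝ (Fin d)) :=
  {x | ⟪w, x⟫ = c}

/-- The margin `M_h(T) = min_{a ∈ T} dist(a, h)` of a hyperplane `h` w.r.t. a set `T`. -/
noncomputable def margin (d : ℕ) (T h : Set (EuclideanSpace ℝ (Fin d))) : ℝ :=
  sInf ((fun a => Metric.infDist a h) '' T)

section InnerProductSpace

variable {F : Type*} [NormedAddCommGroup F] [InnerProductSpace ℝ F]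

theorem infDist_setOf_inner_eq {w : F} (hw : w ≠ 0) (c : ℝ) (a : F) :
    Metric.infDist a {x | ⟪w, x⟫ = c} = |⟪w, a⟫ - c| / ‖w‖ := by
  have hw₀ : 0 < ‖w‖ := norm_pos_iff.mpr hw
  -- the foot of the perpendicular from `a`
  set p := a + ((c - ⟪w, a⟫) / ‖w‖ ^ 2) • w
  have hp : ⟪w, p⟫ = c := by
    simp only [p, inner_add_right, real_inner_smul_right, real_inner_self_eq_norm_sq]
    field_simp
    ring
  apply le_antisymm
  · calc Metric.infDist a {x | ⟪w, x⟫ = c} ≤ dist a p := Metric.infDist_le_dist_of_mem hp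
      _ = |⟪w, a⟫ - c| / ‖w‖ := by
        rw [dist_self_add_right, norm_smul, Real.norm_eq_abs, abs_div, abs_sub_comm, abs_pow,
          abs_norm]
        field_simp
  · refine (Metric.le_infDist ⟨p, hp⟩).mpr fun y (hy : ⟪w, y⟫ = c) => ?_
    rw [div_le_iff₀ hw₀, dist_eq_norm, mul_comm, ← hy, ← inner_sub_right]
    exact abs_real_inner_le_norm w (a - y)

theorem setOf_inner_smul_eq {t : ℝ} (ht : t ≠ 0) (v : F) (c : ℝ) :
    {x | ⟪t • v, x⟫ = t * c} = {x : F | ⟪v, x⟫ = c} := by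
  ext x
  change ⟪t • v, x⟫ = t * c ↔ ⟪v, x⟫ = c
  rw [real_inner_smul_left, mul_right_inj' ht]

theorem inner_le_inner_of_forall_dist_le {K : Set F} (hK : Convex ℝ K) {u v : F} (hv : v ∈ K)
    (hmin : ∀ x ∈ K, dist u v ≤ dist u x) {x : F} (hx : x ∈ K) :
    ⟪u - v, x⟫ ≤ ⟪u - v, v⟫ := by
  have : Nonempty K := ⟨⟨v, hv⟩⟩
  have hinf : ‖u - v‖ = ⨅ y : K, ‖u - y‖ :=
    le_antisymm (le_ciInf fun y => by simpa only [dist_eq_norm] using hmin y y.2)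
      (ciInf_le (⟨0, by rintro _ ⟨y, rfl⟩; exact norm_nonneg _⟩ :
        BddBelow (Set.range fun y : K => ‖u - y‖)) ⟨v, hv⟩)
  have := (norm_eq_iInf_iff_real_inner_le_zero hK hv).mp hinf x hx
  rwa [inner_sub_right, sub_nonpos] at this

theorem inner_half_smul_add (r b : F) :
    ⟪b - r, (1 / 2 : ℝ) • (r + b)⟫ = ⟪b - r, r⟫ + ‖b - r‖ ^ 2 / 2 ∧
      ⟪b - r, (1 / 2 : ℝ) • (r + b)⟫ = ⟪b - r, b⟫ - ‖b - r‖ ^ 2 / 2 := by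
  rw [← real_inner_self_eq_norm_sq, real_inner_smul_right]
  simp only [inner_add_right, inner_sub_right]
  constructor <;> ring

theorem inner_le_of_forall_dist_le_dist {A B : Set F} (hA : Convex ℝ A) (hB : Convex ℝ B)
    {r b : F} (hr : r ∈ A) (hb : b ∈ B) (hmin : ∀ x ∈ A, ∀ y ∈ B, dist r b ≤ dist x y) :
    (∀ x ∈ A, ⟪b - r, x⟫ ≤ ⟪b - r, r⟫) ∧ (∀ y ∈ B, ⟪b - r, b⟫ ≤ ⟪b - r, y⟫) := by
  refine ⟨fun x hx => inner_le_inner_of_forall_dist_le hA hr (fun x' hx' => ?_) hx,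
    fun y hy => ?_⟩
  · rw [dist_comm b r, dist_comm b x']
    exact hmin x' hx' b hb
  · have := inner_le_inner_of_forall_dist_le hB hb (fun y' hy' => hmin r hr y' hy') hy
    rw [← neg_sub b r, inner_neg_left, inner_neg_left] at this
    linarith

theorem half_norm_sub_le_infDist_bisector {r b a : F} (hbr : b - r ≠ 0)
    (ha : ⟪b - r, a⟫ ≤ ⟪b - r, r⟫ ∨ ⟪b - r, b⟫ ≤ ⟪b - r, a⟫) :
    ‖b - r‖ / 2 ≤ Metric.infDist a {x | ⟪b - r, x⟫ = ⟪b - r, (1 / 2 : ℝ) • (r + b)⟫} := by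
  obtain ⟨hc₀r, hc₀b⟩ := inner_half_smul_add r b
  rw [infDist_setOf_inner_eq hbr, le_div_iff₀ (norm_pos_iff.mpr hbr)]
  rcases ha with ha | ha
  · exact le_trans (by nlinarith) (neg_le_abs _)
  · exact le_trans (by nlinarith) (le_abs_self _)

variable {w r b : F} {c m : ℝ}

theorem two_mul_le_norm_sub_of_slab (hw : w ≠ 0) (hr : ⟪w, r⟫ ≤ c - m * ‖w‖)
    (hb : c + m * ‖w‖ ≤ ⟪w, b⟫) : 2 * m ≤ ‖b - r‖ := by
  have hw₀ : 0 < ‖w‖ := norm_pos_iff.mpr hw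
  have hCS : ⟪w, b - r⟫ ≤ ‖w‖ * ‖b - r‖ := real_inner_le_norm w (b - r)
  rw [inner_sub_right] at hCS
  nlinarith

theorem setOf_inner_eq_bisector_of_slab (hw : w ≠ 0) (hbr : b - r ≠ 0)
    (hr : ⟪w, r⟫ ≤ c - m * ‖w‖) (hb : c + m * ‖w‖ ≤ ⟪w, b⟫) (hm : 2 * m = ‖b - r‖) :
    {x | ⟪w, x⟫ = c} = {x | ⟪b - r, x⟫ = ⟪b - r, (1 / 2 : ℝ) • (r + b)⟫} := by
  have hw₀ : 0 < ‖w‖ := norm_pos_iff.mpr hw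
  have hCS : ⟪b - r, w⟫ ≤ ‖b - r‖ * ‖w‖ := real_inner_le_norm (b - r) w
  rw [real_inner_comm, inner_sub_right] at hCS
  -- both inequalities of the slab are tight, and so is Cauchy–Schwarz
  have hrc : ⟪w, r⟫ = c - m * ‖w‖ := by nlinarith
  have hCS_eq : ⟪b - r, w⟫ / (‖b - r‖ * ‖w‖) = 1 := by
    rw [div_eq_one_iff_eq (by positivity), real_inner_comm, inner_sub_right]
    nlinarith
  obtain ⟨-, t, ht, rfl⟩ := (real_inner_div_norm_mul_norm_eq_one_iff _ _).mp hCS_eq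
  have hc : c = t * ⟪b - r, (1 / 2 : ℝ) • (r + b)⟫ := by
    rw [(inner_half_smul_add r b).1]
    rw [real_inner_smul_left, norm_smul, Real.norm_of_nonneg ht.le] at hrc
    linear_combination -hrc + (t * ‖b - r‖ / 2) * hm
  rw [hc, setOf_inner_smul_eq ht.ne']

end InnerProductSpace

theorem dist_le_of_eq_sInf_image2 {X : Type*} [PseudoMetricSpace X] {A B : Set X} {r b x y : X}
    (h : dist r b = sInf (Set.image2 dist A B)) (hx : x ∈ A) (hy : y ∈ B) :
    dist r b ≤ dist x y :=
  h ▸ csInf_le ⟨0, by rintro _ ⟨_, _, _, _, rfl⟩; exact dist_nonneg⟩ ⟨x, hx, y, hy, rfl⟩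

section Margin

variable {d : ℕ}

theorem infDist_hplane {w : EuclideanSpace ℝ (Fin d)} (hw : w ≠ 0) (c : ℝ)
    (a : EuclideanSpace ℝ (Fin d)) :
    Metric.infDist a (hplane d w c) = |⟪w, a⟫ - c| / ‖w‖ :=
  infDist_setOf_inner_eq hw c a

theorem hplane_neg (w : EuclideanSpace ℝ (Fin d)) (c : ℝ) :
    hplane d (-w) (-c) = hplane d w c := by
  ext x
  change ⟪-w, x⟫ = -c ↔ ⟪w, x⟫ = c
  rw [inner_neg_left, neg_inj]

theorem margin_le_infDist {T h : Set (EuclideanSpace ℝ (Fin d))} {a : EuclideanSpace ℝ (Fin d)}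
    (ha : a ∈ T) : margin d T h ≤ Metric.infDist a h :=
  csInf_le ⟨0, by rintro _ ⟨_, _, rfl⟩; exact Metric.infDist_nonneg⟩ ⟨a, ha, rfl⟩

theorem le_margin {T h : Set (EuclideanSpace ℝ (Fin d))} (hT : T.Nonempty) {m : ℝ}
    (hm : ∀ a ∈ T, m ≤ Metric.infDist a h) : m ≤ margin d T h :=
  le_csInf (hT.image _) (by rintro _ ⟨a, ha, rfl⟩; exact hm a ha)

variable {S T : Set (EuclideanSpace ℝ (Fin d))} {w x : EuclideanSpace ℝ (Fin d)} {c : ℝ}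

theorem inner_le_sub_margin_mul_norm (hST : S ⊆ T) (hw : w ≠ 0) (hS : ∀ a ∈ S, ⟪w, a⟫ ≤ c)
    (hx : x ∈ convexHull ℝ S) : ⟪w, x⟫ ≤ c - margin d T (hplane d w c) * ‖w‖ := by
  refine convexHull_min (fun a ha => ?_) (convex_halfSpace_le (innerₛₗ ℝ w).isLinear _) hx
  have := margin_le_infDist (h := hplane d w c) (hST ha)
  rw [infDist_hplane hw, abs_of_nonpos (sub_nonpos.mpr (hS a ha)),
    le_div_iff₀ (norm_pos_iff.mpr hw)] at this
  change ⟪w, a⟫ ≤ _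
  linarith

theorem add_margin_mul_norm_le (hST : S ⊆ T) (hw : w ≠ 0) (hS : ∀ a ∈ S, c ≤ ⟪w, a⟫)
    (hx : x ∈ convexHull ℝ S) : c + margin d T (hplane d w c) * ‖w‖ ≤ ⟪w, x⟫ := by
  have := inner_le_sub_margin_mul_norm hST (neg_ne_zero.mpr hw) (c := -c)
    (fun a ha => by rw [inner_neg_left]; linarith [hS a ha]) hx
  rw [hplane_neg, inner_neg_left, norm_neg] at this
  linarith

variable {TR TB : Set (EuclideanSpace ℝ (Fin d))} {r b : EuclideanSpace ℝ (Fin d)}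

theorem margin_le_half_norm_sub (hw : w ≠ 0) (hR : ∀ a ∈ TR, ⟪w, a⟫ ≤ c)
    (hB : ∀ a ∈ TB, c ≤ ⟪w, a⟫) (hr : r ∈ convexHull ℝ TR) (hb : b ∈ convexHull ℝ TB) :
    margin d (TR ∪ TB) (hplane d w c) ≤ ‖b - r‖ / 2 := by
  have := two_mul_le_norm_sub_of_slab hw
    (inner_le_sub_margin_mul_norm Set.subset_union_left hw hR hr)
    (add_margin_mul_norm_le Set.subset_union_right hw hB hb)
  linarith

theorem hplane_eq_bisector_of_margin_eq (hw : w ≠ 0) (hR : ∀ a ∈ TR, ⟪w, a⟫ ≤ c)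
    (hB : ∀ a ∈ TB, c ≤ ⟪w, a⟫) (hr : r ∈ convexHull ℝ TR) (hb : b ∈ convexHull ℝ TB)
    (hbr : b - r ≠ 0) (hm : margin d (TR ∪ TB) (hplane d w c) = ‖b - r‖ / 2) :
    hplane d w c = hplane d (b - r) ⟪b - r, (1 / 2 : ℝ) • (r + b)⟫ :=
  setOf_inner_eq_bisector_of_slab hw hbr
    (inner_le_sub_margin_mul_norm Set.subset_union_left hw hR hr)
    (add_margin_mul_norm_le Set.subset_union_right hw hB hb) (by linarith)

end Margin

theorem stmt_8_general (d : ℕ) (TR TB : Finset (EuclideanSpace ℝ (Fin d)))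
    (hdisj : convexHull ℝ (TR : Set (EuclideanSpace ℝ (Fin d))) ∩
      convexHull ℝ (TB : Set (EuclideanSpace ℝ (Fin d))) = ∅)
    (r b : EuclideanSpace ℝ (Fin d))
    (hr : r ∈ convexHull ℝ (TR : Set (EuclideanSpace ℝ (Fin d))))
    (hb : b ∈ convexHull ℝ (TB : Set (EuclideanSpace ℝ (Fin d))))
    (hclosest : dist r b = sInf (Set.image2 dist
      (convexHull ℝ (TR : Set (EuclideanSpace ℝ (Fin d))))
      (convexHull ℝ (TB : Set (EuclideanSpace ℝ (Fin d)))))) :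
    -- `h*` is a strong separator …
    (b - r ≠ 0 ∧
      (∀ x ∈ TR, ⟪b - r, x⟫ < ⟪b - r, (1 / 2 : ℝ) • (r + b)⟫) ∧
      (∀ y ∈ TB, ⟪b - r, (1 / 2 : ℝ) • (r + b)⟫ < ⟪b - r, y⟫)) ∧
    -- … with margin `dist r b / 2` …
    margin d (↑TR ∪ ↑TB) (hplane d (b - r) ⟪b - r, (1 / 2 : ℝ) • (r + b)⟫) =
      dist r b / 2 ∧
    -- … and every other strong separator has strictly smaller margin.
    ∀ h : Set (EuclideanSpace ℝ (Fin d)),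
      (∃ (w : EuclideanSpace ℝ (Fin d)) (c : ℝ), w ≠ 0 ∧ h = hplane d w c ∧
        (∀ x ∈ TR, ⟪w, x⟫ < c) ∧ (∀ y ∈ TB, c < ⟪w, y⟫)) →
      h ≠ hplane d (b - r) ⟪b - r, (1 / 2 : ℝ) • (r + b)⟫ →
      margin d (↑TR ∪ ↑TB) h < dist r b / 2 := by
  have hbr : b - r ≠ 0 :=
    sub_ne_zero.mpr (Set.disjoint_iff_inter_eq_empty.mpr hdisj |>.ne_of_mem hr hb).symm
  obtain ⟨hRhull, hBhull⟩ := inner_le_of_forall_dist_le_dist (convex_convexHull ℝ _)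
    (convex_convexHull ℝ _) hr hb fun x hx y hy => dist_le_of_eq_sInf_image2 hclosest hx hy
  have hR : ∀ x ∈ TR, ⟪b - r, x⟫ ≤ ⟪b - r, r⟫ := fun x hx => hRhull x (subset_convexHull ℝ _ hx)
  have hB : ∀ y ∈ TB, ⟪b - r, b⟫ ≤ ⟪b - r, y⟫ := fun y hy => hBhull y (subset_convexHull ℝ _ hy)
  obtain ⟨hc₀r, hc₀b⟩ := inner_half_smul_add r b
  have hsq : 0 < ‖b - r‖ ^ 2 := by positivity
  have hsepR : ∀ x ∈ TR, ⟪b - r, x⟫ < ⟪b - r, (1 / 2 : ℝ) • (r + b)⟫ := fun x hx => by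
    linarith [hR x hx]
  have hsepB : ∀ y ∈ TB, ⟪b - r, (1 / 2 : ℝ) • (r + b)⟫ < ⟪b - r, y⟫ := fun y hy => by
    linarith [hB y hy]
  rw [dist_comm, dist_eq_norm]
  refine ⟨⟨hbr, hsepR, hsepB⟩, ?_, ?_⟩
  · refine le_antisymm (margin_le_half_norm_sub hbr (fun x hx => (hsepR x hx).le)
      (fun y hy => (hsepB y hy).le) hr hb) (le_margin ?_ ?_)
    · exact (convexHull_nonempty_iff.mp ⟨r, hr⟩).mono Set.subset_union_left
    · exact fun a ha => half_norm_sub_le_infDist_bisector hbr (ha.imp (hR a) (hB a))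
  · rintro _ ⟨w, c, hw, rfl, hRw, hBw⟩ hne
    have hRw' : ∀ x ∈ (TR : Set _), ⟪w, x⟫ ≤ c := fun x hx => (hRw x hx).le
    have hBw' : ∀ y ∈ (TB : Set _), c ≤ ⟪w, y⟫ := fun y hy => (hBw y hy).le
    exact (margin_le_half_norm_sub hw hRw' hBw' hr hb).lt_of_ne
      fun h => hne (hplane_eq_bisector_of_margin_eq hw hRw' hBw' hr hb hbr h)

/-- Let `(r, b)` be a closest pair between the disjoint convex hulls of
`T_R` and `T_B`.  The perpendicular bisector `h*` of the segment `rb` is a strong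
separator of `T = T_R ∪ T_B` with margin `dist(r,b)/2`, and every strong separator
`h ≠ h*` has margin `< dist(r,b)/2`; hence `h*` is the unique maximum-margin separator,
for every choice of closest pair. -/
theorem stmt_8 (d : ℕ) (TR TB : Finset (EuclideanSpace ℝ (Fin d)))
    (hR : TR.Nonempty) (hB : TB.Nonempty)
    (hdisj : convexHull ℝ (TR : Set (EuclideanSpace ℝ (Fin d))) ∩
      convexHull ℝ (TB : Set (EuclideanSpace ℝ (Fin d))) = ∅)
    (r b : EuclideanSpace ℝ (Fin d))
    (hr : r ∈ convexHull ℝ (TR : Set (EuclideanSpace ℝ (Fin d))))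
    (hb : b ∈ convexHull ℝ (TB : Set (EuclideanSpace ℝ (Fin d))))
    (hclosest : dist r b = sInf (Set.image2 dist
      (convexHull ℝ (TR : Set (EuclideanSpace ℝ (Fin d))))
      (convexHull ℝ (TB : Set (EuclideanSpace ℝ (Fin d)))))) :
    -- `h*` is a strong separator …
    (b - r ≠ 0 ∧
      (∀ x ∈ TR, ⟪b - r, x⟫ < ⟪b - r, (1 / 2 : ℝ) • (r + b)⟫) ∧
      (∀ y ∈ TB, ⟪b - r, (1 / 2 : ℝ) • (r + b)⟫ < ⟪b - r, y⟫)) ∧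
    -- … with margin `dist r b / 2` …
    margin d (↑TR ∪ ↑TB) (hplane d (b - r) ⟪b - r, (1 / 2 : ℝ) • (r + b)⟫) =
      dist r b / 2 ∧
    -- … and every other strong separator has strictly smaller margin.
    ∀ h : Set (EuclideanSpace ℝ (Fin d)),
      (∃ (w : EuclideanSpace ℝ (Fin d)) (c : ℝ), w ≠ 0 ∧ h = hplane d w c ∧
        (∀ x ∈ TR, ⟪w, x⟫ < c) ∧ (∀ y ∈ TB, c < ⟪w, y⟫)) →
      h ≠ hplane d (b - r) ⟪b - r, (1 / 2 : ℝ) • (r + b)⟫ →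
      margin d (↑TR ∪ ↑TB) h < dist r b / 2 :=
  stmt_8_general d TR TB hdisj r b hr hb hclosest
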